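/- arXiv:1501.05424 — 2 statements merged into one kernel-verified Lean document; each statement's English description precedes it below -/
import Mathlib

section
/- The palindromic width of a non-abelian free group with respect to a free basis is infinite. -/
/-!
For a word `p`, Brooks' counting function `h_p(w) = #{occurrences of p in w} - #{occurrences of
p⁻¹ in w}`, evaluated on reduced words, is a quasimorphism of the free group: in `g * h` the
reduced words of `g` and `h` cancel along a common piece `t`, and `h_p(t⁻¹) = -h_p(t)`, so only
occurrences straddling the three junctions are lost. Reversing a word turns occurrences of `p`
into occurrences of `p.reverse`, and reduced words of palindromes are palindromes, so the
quasimorphism `ψ = h_p - h_{p.reverse}` vanishes on palindromes and is therefore bounded by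
`12 k` on products of `k` palindromes when `p = x y`. But `ψ([x, y] ^ n) = 2 n`.
-/

/-- Evaluation of a word over an alphabet of generators and their inverses. -/
def evalWord {X G : Type*} [Group G] (f : X → G) (w : List (X × Bool)) : G :=
  (w.map (fun p => if p.2 then f p.1 else (f p.1)⁻¹)).prod

/-- A word is a palindrome if it reads the same forwards and backwards. -/
def IsPalindromeWord {X : Type*} (w : List (X × Bool)) : Prop := w.reverse = w

open List

section InfixCount

variable {α β : Type*} [DecidableEq α]

def infixCount (p : List α) : List α → ℕ
  | [] => 0
  | a :: l => (if p <+: a :: l then 1 else 0) + infixCount p l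

@[simp] lemma infixCount_nil (p : List α) : infixCount p [] = 0 := rfl

@[simp] lemma infixCount_cons (p : List α) (a : α) (l : List α) :
    infixCount p (a :: l) = (if p <+: a :: l then 1 else 0) + infixCount p l := rfl

lemma infixCount_append_singleton (p l : List α) (a : α) :
    infixCount p (l ++ [a]) = infixCount p l + if p <:+ l ++ [a] then 1 else 0 := by
  induction l with
  | nil => simp [suffix_cons_iff, prefix_cons_iff, or_comm, add_comm]
  | cons b l ih =>
    have hlong : p = b :: (l ++ [a]) → ¬ p <+: b :: l ∧ ¬ p <:+ l ++ [a] := by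
      rintro rfl
      constructor <;> intro h <;> simpa using h.length_le
    have hpre : p <+: b :: (l ++ [a]) ↔ p = b :: (l ++ [a]) ∨ p <+: b :: l :=
      prefix_concat_iff (l₂ := b :: l)
    rw [cons_append, infixCount_cons, ih, infixCount_cons]
    simp only [hpre, suffix_cons_iff]
    by_cases hp : p = b :: (l ++ [a]) <;> simp_all <;> omega

lemma infixCount_reverse (p l : List α) : infixCount p l.reverse = infixCount p.reverse l := by
  induction l with
  | nil => rfl
  | cons a l ih =>
    have h : p <:+ (a :: l).reverse ↔ p.reverse <+: a :: l := by
      rw [← reverse_prefix, reverse_reverse]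
    rw [reverse_cons, infixCount_append_singleton, ih, infixCount_cons, add_comm, ← reverse_cons]
    simp only [h]

lemma infixCount_map [DecidableEq β] {f : α → β} (hf : Function.Injective f) (p l : List α) :
    infixCount (p.map f) (l.map f) = infixCount p l := by
  induction l with
  | nil => rfl
  | cons a l ih =>
    rw [map_cons, infixCount_cons, ih, ← map_cons, infixCount_cons]
    simp only [prefix_map_iff_of_injective hf]

lemma infixCount_add_infixCount_le (p u v : List α) :
    infixCount p u + infixCount p v ≤ infixCount p (u ++ v) := by
  induction u with
  | nil => simp
  | cons a u ih =>
    have : (if p <+: a :: u then 1 else 0) ≤ if p <+: a :: (u ++ v) then 1 else 0 := by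
      split_ifs with h h' <;> first | omega | exact absurd (prefix_append_of_prefix h) h'
    simp only [cons_append, infixCount_cons]
    omega

lemma infixCount_append_le (p u v : List α) :
    infixCount p (u ++ v) ≤ infixCount p u + infixCount p v + min u.length p.length := by
  induction u with
  | nil => simp
  | cons a u ih =>
    simp only [cons_append, infixCount_cons, length_cons]
    by_cases h : p.length ≤ u.length + 1
    · have hiff : p <+: a :: (u ++ v) ↔ p <+: a :: u :=
        ⟨fun hp => prefix_of_prefix_length_le hp (prefix_append (a :: u) v) (by simpa using h),
          prefix_append_of_prefix⟩
      simp only [hiff]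
      omega
    · have : (if p <+: a :: (u ++ v) then 1 else 0) ≤ 1 := by split <;> omega
      omega

end InfixCount

namespace FreeGroup

variable {X : Type*}

theorem Red.Step.reverse {L₁ L₂ : List (X × Bool)} (h : Red.Step L₁ L₂) :
    Red.Step L₁.reverse L₂.reverse := by
  cases h
  simp

theorem Red.reverse {L₁ L₂ : List (X × Bool)} (h : Red L₁ L₂) :
    Red L₁.reverse L₂.reverse :=
  Relation.ReflTransGen.lift List.reverse (fun _ _ => Red.Step.reverse) L₁ L₂ h

variable [DecidableEq X]

theorem reduce_reverse (L : List (X × Bool)) : reduce L.reverse = (reduce L).reverse := by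
  apply reduce.min
  rw [← reverse_reverse (reduce L.reverse)]
  apply Red.reverse
  apply Red.reduce_left
  simpa using (reduce.red (L := L.reverse)).reverse

theorem reverse_toWord_mk {w : List (X × Bool)} (hw : w.reverse = w) :
    (mk w).toWord.reverse = (mk w).toWord := by
  rw [toWord_mk, ← reduce_reverse, hw]

theorem IsReduced.exists_reduce_append {u v : List (X × Bool)} (hu : IsReduced u)
    (hv : IsReduced v) :
    ∃ a t b, u = a ++ t ∧ v = invRev t ++ b ∧ reduce (u ++ v) = a ++ b := by
  induction u using List.reverseRecOn generalizing v with
  | nil => exact ⟨[], [], v, rfl, rfl, hv.reduce_eq⟩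
  | append_singleton u c ih =>
    rcases v with _ | ⟨d, v⟩
    · exact ⟨u ++ [c], [], [], by simp, rfl, by simpa using hu.reduce_eq⟩
    by_cases hcd : d = (c.1, !c.2)
    · obtain ⟨a, t, b, rfl, rfl, hab⟩ := ih (isChain_append.1 hu).1 hv.tail
      refine ⟨a, t ++ [c], b, by simp, by simp [invRev, hcd], ?_⟩
      rw [← hab, hcd, append_assoc (a ++ t), singleton_append]
      exact reduce.Step.eq Red.Step.not
    · refine ⟨u ++ [c], [], d :: v, by simp, rfl, IsReduced.reduce_eq ?_⟩
      refine isChain_append.2 ⟨hu, hv, ?_⟩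
      simp only [getLast?_concat, Option.mem_def, Option.some.injEq, head?_cons]
      rintro _ rfl _ rfl hfst
      by_contra hsnd
      exact hcd (Prod.ext hfst.symm (Bool.eq_not_iff.2 (Ne.symm hsnd)))

theorem abs_toWord_mul_sub_le {f : List (X × Bool) → ℤ} {D : ℤ}
    (hinv : ∀ t, f (invRev t) = -f t) (happend : ∀ u v, |f (u ++ v) - f u - f v| ≤ D)
    (g h : FreeGroup X) : |f (g * h).toWord - f g.toWord - f h.toWord| ≤ 3 * D := by
  obtain ⟨a, t, b, hg, hh, hgh⟩ :=
    isReduced_toWord.exists_reduce_append (isReduced_toWord (x := h))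
  have h₁ := happend a b
  have h₂ := happend a t
  have h₃ := happend (invRev t) b
  rw [hinv] at h₃
  rw [toWord_mul, hgh, hg, hh]
  rw [abs_le] at *
  constructor <;> linarith

end FreeGroup

theorem evalWord_of {X : Type*} (w : List (X × Bool)) :
    evalWord FreeGroup.of w = FreeGroup.mk w := by
  rw [← FreeGroup.lift_of_apply (FreeGroup.mk w), FreeGroup.lift_mk, evalWord]
  simp only [cond_eq_ite]

theorem abs_list_prod_le_mul_length {M : Type*} [Monoid M] {q : M → ℤ} {D : ℤ}
    (hmul : ∀ g h, |q (g * h) - q g - q h| ≤ D) (hone : q 1 = 0) {l : List M}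
    (hl : ∀ g ∈ l, q g = 0) : |q l.prod| ≤ D * l.length := by
  induction l with
  | nil => simp [hone]
  | cons g l ih =>
    have h₁ := hmul g l.prod
    have h₂ := ih fun g' hg' => hl g' (mem_cons_of_mem g hg')
    rw [hl g mem_cons_self] at h₁
    rw [prod_cons, length_cons]
    push_cast
    rw [abs_le] at *
    constructor <;> linarith

section BrooksCount

open FreeGroup

variable {X : Type*} [DecidableEq X]

lemma infixCount_invRev (p w : List (X × Bool)) :
    infixCount p (invRev w) = infixCount (invRev p) w := by
  have hf : Function.Involutive fun g : X × Bool => (g.1, !g.2) := fun g => by simp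
  have hp : p.reverse = (invRev p).map fun g => (g.1, !g.2) := by
    simp [invRev, map_reverse, hf.comp_self]
  rw [invRev, infixCount_reverse, hp, infixCount_map hf.injective]

def brooksCount (p w : List (X × Bool)) : ℤ := infixCount p w - infixCount (invRev p) w

lemma brooksCount_invRev (p w : List (X × Bool)) :
    brooksCount p (invRev w) = -brooksCount p w := by
  rw [brooksCount, brooksCount, infixCount_invRev, infixCount_invRev, invRev_invRev, neg_sub]

lemma brooksCount_reverse (p w : List (X × Bool)) :
    brooksCount p w.reverse = brooksCount p.reverse w := by
  have h : (invRev p).reverse = invRev p.reverse := by simp [invRev]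
  rw [brooksCount, brooksCount, infixCount_reverse, infixCount_reverse, h]

lemma abs_brooksCount_append_sub_le (p u v : List (X × Bool)) :
    |brooksCount p (u ++ v) - brooksCount p u - brooksCount p v| ≤ p.length := by
  have h₁ := infixCount_add_infixCount_le p u v
  have h₂ := infixCount_append_le p u v
  have h₃ := infixCount_add_infixCount_le (invRev p) u v
  have h₄ := infixCount_append_le (invRev p) u v
  rw [invRev_length] at h₄
  rw [abs_le, brooksCount, brooksCount, brooksCount]
  omega

def skewBrooksCount (p w : List (X × Bool)) : ℤ := brooksCount p w - brooksCount p.reverse w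

lemma skewBrooksCount_of_reverse_eq (p : List (X × Bool)) {w : List (X × Bool)}
    (hw : w.reverse = w) : skewBrooksCount p w = 0 := by
  rw [skewBrooksCount, ← brooksCount_reverse, hw, sub_self]

lemma skewBrooksCount_invRev (p w : List (X × Bool)) :
    skewBrooksCount p (invRev w) = -skewBrooksCount p w := by
  rw [skewBrooksCount, skewBrooksCount, brooksCount_invRev, brooksCount_invRev, neg_sub_neg,
    neg_sub]

lemma abs_skewBrooksCount_append_sub_le (p u v : List (X × Bool)) :
    |skewBrooksCount p (u ++ v) - skewBrooksCount p u - skewBrooksCount p v| ≤ 2 * p.length := by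
  have h₁ := abs_brooksCount_append_sub_le p u v
  have h₂ := abs_brooksCount_append_sub_le p.reverse u v
  rw [length_reverse] at h₂
  rw [abs_le] at *
  simp only [skewBrooksCount]
  constructor <;> linarith

end BrooksCount

open scoped commutatorElement

namespace FreeGroup

variable {X : Type*} [DecidableEq X] {x y : X}

theorem toWord_commutatorElement_pow (hxy : x ≠ y) (n : ℕ) :
    (⁅of x, of y⁆ ^ n).toWord =
      (replicate n [(x, true), (y, true), (x, false), (y, false)]).flatten := by
  have hc : ⁅of x, of y⁆ = mk [(x, true), (y, true), (x, false), (y, false)] := by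
    simp [commutatorElement_def, of, mul_mk, invRev]
  have hcyc : IsCyclicallyReduced [(x, true), (y, true), (x, false), (y, false)] := by
    simp [IsCyclicallyReduced, IsReduced, hxy, hxy.symm]
  rw [hc, toWord_pow, toWord_mk, hcyc.isReduced.reduce_eq,
    (hcyc.flatten_replicate n).isReduced.reduce_eq]

theorem skewBrooksCount_toWord_commutatorElement_pow (hxy : x ≠ y) (n : ℕ) :
    skewBrooksCount [(x, true), (y, true)] (⁅of x, of y⁆ ^ n).toWord = 2 * n := by
  rw [toWord_commutatorElement_pow hxy]
  induction n with
  | zero => simp [skewBrooksCount, brooksCount]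
  | succ n ih =>
    have hhead : ¬ [(x, false)] <+:
        (replicate n [(x, true), (y, true), (x, false), (y, false)]).flatten := by
      cases n <;> simp [replicate_succ]
    simp [skewBrooksCount, brooksCount, replicate_succ, invRev, hxy, hxy.symm, hhead] at ih ⊢
    linarith

end FreeGroup

open FreeGroup

/-- The palindromic width of a non-abelian free group with respect to a free
basis is infinite: for every `k` there is an element that is not a product of
at most `k` palindromes in the basis. -/
theorem palindromic_width_free_group_infinite {X : Type*} (x y : X) (hxy : x ≠ y)
    (k : ℕ) :
    ∃ g : FreeGroup X, ¬ ∃ ws : List (List (X × Bool)),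
      ws.length ≤ k ∧ (∀ w ∈ ws, IsPalindromeWord w) ∧
        (ws.map (evalWord FreeGroup.of)).prod = g := by
  classical
  let q : FreeGroup X → ℤ := fun g => skewBrooksCount [(x, true), (y, true)] g.toWord
  have hmul : ∀ g h, |q (g * h) - q g - q h| ≤ 3 * (2 * 2) := by
    simpa using abs_toWord_mul_sub_le (skewBrooksCount_invRev _)
      (abs_skewBrooksCount_append_sub_le [(x, true), (y, true)])
  refine ⟨⁅of x, of y⁆ ^ (6 * k + 1), ?_⟩
  rintro ⟨ws, hlen, hpal, hprod⟩
  have hq_pal : ∀ g ∈ ws.map (evalWord FreeGroup.of), q g = 0 := by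
    simp only [mem_map]
    rintro _ ⟨w, hw, rfl⟩
    rw [evalWord_of]
    exact skewBrooksCount_of_reverse_eq _ (reverse_toWord_mk (hpal w hw))
  have hbound := abs_list_prod_le_mul_length hmul (by simp [q, skewBrooksCount, brooksCount]) hq_pal
  rw [hprod, length_map] at hbound
  simp only [q, skewBrooksCount_toWord_commutatorElement_pow hxy] at hbound
  rw [abs_le] at hbound
  omega
end

section
/- In the solvable Baumslag–Solitar group BS(1,n) = ⟨a, t | t⁻¹at = aⁿ⟩ with n ≥ 2, every element is a product of at most 2 palindromes in the generators {a, t}, and the palindromic width is exactly 2. -/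
/-- The relation `t⁻¹ a t = aⁿ` in the free group on `{a, t}` (generator `0`
is `a`, generator `1` is `t`). -/
def bsRel (n : ℕ) : Set (FreeGroup (Fin 2)) :=
  {(FreeGroup.of 1)⁻¹ * FreeGroup.of 0 * FreeGroup.of 1 * (FreeGroup.of 0 ^ n)⁻¹}

/-- The solvable Baumslag–Solitar group `BS(1,n) = ⟨a, t | t⁻¹at = aⁿ⟩`. -/
def BS1 (n : ℕ) := PresentedGroup (bsRel n)

noncomputable instance (n : ℕ) : Group (BS1 n) := by unfold BS1; infer_instance

/-- The generators `a, t` of `BS(1,n)`. -/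
noncomputable def bsGen (n : ℕ) : Fin 2 → BS1 n := fun i => PresentedGroup.of i

/-!
Every element of `BS(1,n)` has the form `tᵖ aᵐ t^q` with `p ≥ 0`, since `a tᵖ = tᵖ a^(nᵖ)` lets
one move every `a` to the right of the leading `t`-power. Hence it equals the palindrome
`tᵖ aᵐ tᵖ` times the palindrome `t^(q-p)`.

For the lower bound, map `BS(1,n)` onto the dihedral group of order `2(n+1)` by `a ↦ r`,
`t ↦ s`. The reflection `s` inverts both generators by conjugation, and reversing a word
inverts its value after inverting the letters, so `s` inverts the image of every palindrome.
It does not invert the image `r s` of `a t` as soon as `n + 1 > 2`.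
-/

section Words

variable {X G : Type*} [Group G]

def zpowWord (x : X) (m : ℤ) : List (X × Bool) :=
  List.replicate m.natAbs (x, decide (0 ≤ m))

@[simp]
theorem evalWord_append (f : X → G) (u v : List (X × Bool)) :
    evalWord f (u ++ v) = evalWord f u * evalWord f v := by
  simp [evalWord]

@[simp]
theorem evalWord_zpowWord (f : X → G) (x : X) (m : ℤ) :
    evalWord f (zpowWord x m) = f x ^ m := by
  rcases le_or_gt 0 m with hm | hm
  · simp [evalWord, zpowWord, hm, ← zpow_natCast, abs_of_nonneg hm]
  · simp [evalWord, zpowWord, hm.not_ge, ← zpow_natCast, abs_of_neg hm]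

theorem MonoidHom.map_evalWord {H : Type*} [Group H] (φ : G →* H) (f : X → G)
    (w : List (X × Bool)) : φ (evalWord f w) = evalWord (φ ∘ f) w := by
  simp only [evalWord, map_list_prod, List.map_map]
  congr 1
  refine List.map_congr_left fun ⟨x, b⟩ _ => ?_
  cases b <;> simp

theorem evalWord_reverse (f : X → G) (w : List (X × Bool)) :
    evalWord f w.reverse = (evalWord (fun x => (f x)⁻¹) w)⁻¹ := by
  induction w with
  | nil => simp [evalWord]
  | cons p w ih =>
    rw [List.reverse_cons, evalWord_append, ih]
    obtain ⟨x, _ | _⟩ := p <;> simp [evalWord]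

theorem isPalindromeWord_zpowWord (x : X) (m : ℤ) : IsPalindromeWord (zpowWord x m) :=
  List.reverse_replicate ..

theorem IsPalindromeWord.append_append {u v : List (X × Bool)} (hu : IsPalindromeWord u)
    (hv : IsPalindromeWord v) : IsPalindromeWord (u ++ v ++ u) := by
  rw [IsPalindromeWord] at *
  simp only [List.reverse_append, hu, hv, List.append_assoc]

theorem IsPalindromeWord.conj_evalWord {f : X → G} {σ : G} (hσ : ∀ x, σ * f x * σ⁻¹ = (f x)⁻¹)
    {w : List (X × Bool)} (hw : IsPalindromeWord w) :
    σ * evalWord f w * σ⁻¹ = (evalWord f w)⁻¹ := by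
  have hconj : (fun x => (f x)⁻¹) = (MulAut.conj σ).toMonoidHom ∘ f :=
    funext fun x => (hσ x).symm
  have := evalWord_reverse f w
  rw [hw, hconj, ← MonoidHom.map_evalWord, MulEquiv.coe_toMonoidHom, MulAut.conj_apply] at this
  exact (inv_eq_iff_eq_inv.mpr this).symm

theorem exists_isPalindromeWord_evalWord_eq_prod (f : X → G) {ws : List (List (X × Bool))}
    (hlen : ws.length ≤ 1) (hws : ∀ w ∈ ws, IsPalindromeWord w) :
    ∃ w, IsPalindromeWord w ∧ evalWord f w = (ws.map (evalWord f)).prod := by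
  match ws, hlen with
  | [], _ => exact ⟨[], rfl, rfl⟩
  | [w], _ => exact ⟨w, hws w (List.mem_singleton_self w), by simp⟩

end Words

section NormalForm

variable {G : Type*} [Group G] {a t : G} {n : ℕ}

theorem zpow_mul_eq_mul_zpow (h : t⁻¹ * a * t = a ^ n) (m : ℤ) :
    a ^ m * t = t * a ^ (m * n) := by
  have hsemi : SemiconjBy t (a ^ n) a := by
    rw [SemiconjBy, ← h]
    group
  rw [mul_comm, zpow_mul, zpow_natCast]
  exact (hsemi.zpow_right m).eq.symm

theorem zpow_mul_pow_eq_pow_mul_zpow (h : t⁻¹ * a * t = a ^ n) (m : ℤ) (p : ℕ) :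
    a ^ m * t ^ p = t ^ p * a ^ (m * n ^ p) := by
  induction p generalizing m with
  | zero => simp
  | succ p ih =>
    rw [pow_succ', ← mul_assoc, zpow_mul_eq_mul_zpow h, mul_assoc, ih, ← mul_assoc, pow_succ']
    congr 2
    ring

theorem exists_eq_pow_mul_zpow_mul_zpow (h : t⁻¹ * a * t = a ^ n) {x : G}
    (hx : x ∈ Subgroup.closure {a, t}) : ∃ (p : ℕ) (m q : ℤ), x = t ^ p * a ^ m * t ^ q := by
  induction hx using Subgroup.closure_induction_left with
  | one => exact ⟨0, 0, 0, by simp⟩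
  | mul_left x hx y _ ih =>
    obtain ⟨p, m, q, rfl⟩ := ih
    rcases hx with hx | hx <;> subst x
    · refine ⟨p, n ^ p + m, q, ?_⟩
      have hcomm := zpow_mul_pow_eq_pow_mul_zpow h 1 p
      rw [zpow_one, one_mul] at hcomm
      rw [zpow_add, ← mul_assoc (t ^ p), ← hcomm]
      simp only [mul_assoc]
    · exact ⟨p + 1, m, q, by simp only [pow_succ', mul_assoc]⟩
  | inv_mul_cancel x hx y _ ih =>
    obtain ⟨p, m, q, rfl⟩ := ih
    rcases hx with hx | hx <;> subst x
    · refine ⟨p, -n ^ p + m, q, ?_⟩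
      have hcomm := zpow_mul_pow_eq_pow_mul_zpow h (-1) p
      rw [zpow_neg_one, neg_one_mul] at hcomm
      rw [zpow_add, ← mul_assoc (t ^ p), ← hcomm]
      simp only [mul_assoc]
    · cases p with
      | succ p => exact ⟨p, m, q, by rw [pow_succ']; group⟩
      | zero =>
        refine ⟨0, m * n, q - 1, ?_⟩
        rw [pow_zero, one_mul, ← inv_mul_eq_iff_eq_mul.mpr (zpow_mul_eq_mul_zpow h m)]
        group

end NormalForm

namespace BS1

variable (n : ℕ)

theorem bsGen_relation : (bsGen n 1)⁻¹ * bsGen n 0 * bsGen n 1 = bsGen n 0 ^ n := by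
  have h := PresentedGroup.one_of_mem (rels := bsRel n) rfl
  simp only [map_mul, map_inv, map_pow] at h
  exact mul_inv_eq_one.mp h

theorem closure_bsGen : Subgroup.closure {bsGen n 0, bsGen n 1} = ⊤ :=
  eq_top_iff.mpr fun x _ => PresentedGroup.generated_by _ _
    (fun j => Subgroup.subset_closure (by
      fin_cases j
      exacts [Set.mem_insert _ _, Set.mem_insert_of_mem _ rfl])) x

theorem exists_eq_pow_mul_zpow_mul_zpow (g : BS1 n) :
    ∃ (p : ℕ) (m q : ℤ), g = bsGen n 1 ^ p * bsGen n 0 ^ m * bsGen n 1 ^ q :=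
  _root_.exists_eq_pow_mul_zpow_mul_zpow (bsGen_relation n)
    (closure_bsGen n ▸ Subgroup.mem_top g)

-- `tᵖ aᵐ t^q = (tᵖ aᵐ tᵖ) t^(q - p)`
theorem exists_isPalindromeWord_mul_eq (g : BS1 n) : ∃ u v : List (Fin 2 × Bool),
    IsPalindromeWord u ∧ IsPalindromeWord v ∧ evalWord (bsGen n) u * evalWord (bsGen n) v = g := by
  obtain ⟨p, m, q, rfl⟩ := exists_eq_pow_mul_zpow_mul_zpow n g
  refine ⟨zpowWord 1 p ++ zpowWord 0 m ++ zpowWord 1 p, zpowWord 1 (q - p),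
    (isPalindromeWord_zpowWord _ _).append_append (isPalindromeWord_zpowWord _ _),
    isPalindromeWord_zpowWord _ _, ?_⟩
  simp only [evalWord_append, evalWord_zpowWord, zpow_natCast, zpow_sub]
  group

-- `t` acts on the rotations `ℤ/(n+1)` by inversion, which is multiplication by `n` there.
noncomputable def toDihedral : BS1 n →* DihedralGroup (n + 1) :=
  PresentedGroup.toGroup (f := ![.r 1, .sr 0]) <| by
    rintro _ rfl
    simp only [map_mul, map_inv, map_pow, FreeGroup.lift_apply_of, Matrix.cons_val_zero,
      Matrix.cons_val_one, Matrix.cons_val_fin_one, DihedralGroup.inv_sr, DihedralGroup.inv_r,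
      DihedralGroup.sr_mul_r, DihedralGroup.sr_mul_sr, DihedralGroup.r_pow, DihedralGroup.r_mul_r,
      zero_add, zero_sub, one_mul]
    rw [← neg_add, add_comm (1 : ZMod (n + 1)), ← Nat.cast_add_one, ZMod.natCast_self, neg_zero,
      DihedralGroup.r_zero]

theorem toDihedral_bsGen (i : Fin 2) : toDihedral n (bsGen n i) = ![.r 1, .sr 0] i :=
  PresentedGroup.toGroup.of _

theorem evalWord_ne_of_isPalindromeWord (hn : 2 ≤ n) {w : List (Fin 2 × Bool)}
    (hw : IsPalindromeWord w) : evalWord (bsGen n) w ≠ bsGen n 0 * bsGen n 1 := by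
  intro hwg
  have himage : evalWord ![.r 1, .sr 0] w = (DihedralGroup.sr (-1) : DihedralGroup (n + 1)) := by
    have hcomp : toDihedral n ∘ bsGen n = ![.r 1, .sr 0] := funext (toDihedral_bsGen n)
    rw [← hcomp, ← MonoidHom.map_evalWord, hwg, map_mul, toDihedral_bsGen, toDihedral_bsGen]
    simp
  have hσ (i : Fin 2) : DihedralGroup.sr 0 * ![.r 1, .sr 0] i * (DihedralGroup.sr 0)⁻¹ =
      (![.r 1, .sr 0] i : DihedralGroup (n + 1))⁻¹ := by
    fin_cases i <;> simp
  have hconj := hw.conj_evalWord hσ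
  rw [himage] at hconj
  simp only [DihedralGroup.inv_sr, DihedralGroup.sr_mul_sr, DihedralGroup.r_mul_sr, sub_zero,
    sub_neg_eq_add, zero_add, DihedralGroup.sr.injEq] at hconj
  have : Fact (2 < n + 1) := ⟨by omega⟩
  exact CharP.neg_one_ne_one (ZMod (n + 1)) (n + 1) hconj.symm

end BS1

/-- In `BS(1,n) = ⟨a, t | t⁻¹at = aⁿ⟩` with `n ≥ 2`, every element is a product
of at most `2` palindromes in the generators `{a, t}`, and the palindromic
width with respect to `{a, t}` is exactly `2`. -/
theorem palindromic_width_solvable_baumslag_solitar (n : ℕ) (hn : 2 ≤ n) :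
    (∀ g : BS1 n, ∃ ws : List (List (Fin 2 × Bool)),
      ws.length ≤ 2 ∧ (∀ w ∈ ws, IsPalindromeWord w) ∧
        (ws.map (evalWord (bsGen n))).prod = g) ∧
    (∃ g : BS1 n, ¬ ∃ ws : List (List (Fin 2 × Bool)),
      ws.length ≤ 1 ∧ (∀ w ∈ ws, IsPalindromeWord w) ∧
        (ws.map (evalWord (bsGen n))).prod = g) := by
  refine ⟨fun g => ?_, bsGen n 0 * bsGen n 1, ?_⟩
  · obtain ⟨u, v, hu, hv, huv⟩ := BS1.exists_isPalindromeWord_mul_eq n g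
    refine ⟨[u, v], by simp, ?_, by simpa using huv⟩
    simp only [List.mem_cons, List.not_mem_nil, or_false]
    rintro w (rfl | rfl)
    exacts [hu, hv]
  · rintro ⟨ws, hlen, hws, hprod⟩
    obtain ⟨w, hw, hweval⟩ := exists_isPalindromeWord_evalWord_eq_prod (bsGen n) hlen hws
    exact BS1.evalWord_ne_of_isPalindromeWord n hn hw (hweval.trans hprod)
end
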